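/- (Proposition 3.1, estimate (3.12).) For all real α, β ≥ 0 and fixed μ₁ ∈ [0,1] there exist constants C > 0 and ε ∈ (0,1) such that for all σ > 0 and p₀ ∈ ℝ² with σ + |p₀| < ε: ( ∫_{ℝ²}∫_{ℝ²} [ (ln(2+|p|))^α / (1+|ln|p||)^β ]² · |φ_{in,p₀}(p₁,p₂)|² dp₁ dp₂ )^{1/2} ≤ C·|ln(σ+|p₀|)|^{−β}. -/

import Mathlib

/-!
Put `s = σ + |p₀|`. Where `|p|² ≤ s` the denominator of the weight is at least `(|ln s| / 2)^β`
while the numerator stays bounded, and `|φ_{in,p₀}|²` has integral `1`. Where `|p|² > s`, the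
shifted momenta `p₁ - p₀`, `p₂ + p₀` have `|p₁ - p₀|² + |p₂ + p₀|² ≥ s / 8`; since `σ ≤ s`, part of
the Gaussian exponent is then at least `1 / (32 s)`, another part absorbs the weight (which grows
at most like `exp (α |p|)`), and `exp (-1 / (32 s)) = O(|ln s|^(-2β))` because `|ln s| ≤ 1 / s`.
-/

open MeasureTheory

noncomputable abbrev R2 : Type := EuclideanSpace ℝ (Fin 2)

open Real

section LogWeight

variable {E : Type*} [NormedAddCommGroup E] {α β : ℝ}

noncomputable def logWeight (α β : ℝ) (p : E) : ℝ :=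
  log (2 + ‖p‖) ^ α / (1 + |log ‖p‖|) ^ β

lemma logWeight_nonneg (p : E) : 0 ≤ logWeight α β p :=
  div_nonneg (rpow_nonneg (log_nonneg (by linarith [norm_nonneg p])) _)
    (rpow_nonneg (by positivity) _)

lemma logWeight_le_exp (hα : 0 ≤ α) (hβ : 0 ≤ β) (p : E) :
    logWeight α β p ≤ exp (α * ‖p‖) := by
  have hlog_nonneg : 0 ≤ log (2 + ‖p‖) := log_nonneg (by linarith [norm_nonneg p])
  have hlog_le : log (2 + ‖p‖) ≤ exp ‖p‖ := by
    linarith [log_le_sub_one_of_pos (x := 2 + ‖p‖) (by positivity), add_one_le_exp ‖p‖]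
  calc logWeight α β p ≤ log (2 + ‖p‖) ^ α :=
        div_le_self (rpow_nonneg hlog_nonneg _)
          (one_le_rpow (by linarith [abs_nonneg (log ‖p‖)]) hβ)
    _ ≤ exp ‖p‖ ^ α := by gcongr
    _ = exp (α * ‖p‖) := by rw [← exp_mul, mul_comm]

lemma logWeight_le_of_sq_norm_le (hα : 0 ≤ α) (hβ : 0 ≤ β) {p : E} {s : ℝ} (hp : p ≠ 0)
    (hps : ‖p‖ ^ 2 ≤ s) (hs : s < 1) :
    logWeight α β p ≤ 2 ^ (α + β) * |log s| ^ (-β) := by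
  have hp0 : 0 < ‖p‖ := norm_pos_iff.2 hp
  have hs0 : 0 < s := lt_of_lt_of_le (by positivity) hps
  have hp1 : ‖p‖ < 1 := by nlinarith
  have hlog_s : log s < 0 := log_neg hs0 hs
  have hnum : log (2 + ‖p‖) ≤ 2 := by
    linarith [log_le_sub_one_of_pos (x := 2 + ‖p‖) (by positivity)]
  have hden : |log s| / 2 ≤ 1 + |log ‖p‖| := by
    have h := log_le_log (by positivity) hps
    rw [log_pow, Nat.cast_ofNat] at h
    rw [abs_of_neg hlog_s, abs_of_neg (log_neg hp0 hp1)]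
    linarith
  calc logWeight α β p ≤ 2 ^ α / (|log s| / 2) ^ β := by
        have hL : 0 < |log s| / 2 := div_pos (abs_pos.2 hlog_s.ne) two_pos
        exact div_le_div₀ (by positivity)
          (rpow_le_rpow (log_nonneg (by linarith [norm_nonneg p])) hnum hα)
          (rpow_pos_of_pos hL β) (rpow_le_rpow hL.le hden hβ)
    _ = 2 ^ (α + β) * |log s| ^ (-β) := by
        rw [div_rpow (abs_nonneg _) zero_le_two, rpow_add two_pos, rpow_neg (abs_nonneg _)]
        field_simp

end LogWeight

lemma exp_neg_div_le_rpow_abs_log {c b s : ℝ} (hc : 0 < c) (hb : 0 ≤ b) (hs0 : 0 < s)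
    (hs1 : s < 1) : exp (-c / s) ≤ (b / c) ^ b * |log s| ^ (-b) := by
  have hL : 0 < |log s| := abs_pos.2 (log_neg hs0 hs1).ne
  have hL_le : |log s| ≤ s⁻¹ := by
    rw [abs_of_neg (log_neg hs0 hs1), ← log_inv]
    linarith [log_le_sub_one_of_pos (inv_pos.2 hs0)]
  have hpow : |log s| ^ b ≤ (b / c) ^ b * exp (c / s) := by
    calc |log s| ^ b ≤ |s⁻¹| ^ b :=
          rpow_le_rpow hL.le (by rwa [abs_of_pos (inv_pos.2 hs0)]) hb
      _ ≤ (b / |c|) ^ b * exp (|c| * |s⁻¹|) := ProbabilityTheory.rpow_abs_le_mul_exp_abs _ hb hc.ne'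
      _ = (b / c) ^ b * exp (c / s) := by
          rw [abs_of_pos hc, abs_of_pos (inv_pos.2 hs0), ← div_eq_mul_inv]
  calc exp (-c / s) = exp (-c / s) * |log s| ^ b * |log s| ^ (-b) := by
        rw [mul_assoc, ← rpow_add hL, add_neg_cancel, rpow_zero, mul_one]
    _ ≤ exp (-c / s) * ((b / c) ^ b * exp (c / s)) * |log s| ^ (-b) := by gcongr
    _ = (b / c) ^ b * |log s| ^ (-b) := by
        rw [mul_left_comm, ← exp_add, neg_div, neg_add_cancel, exp_zero, mul_one]

lemma le_eight_mul_sq_add_sq {a b s : ℝ} (ha : 0 ≤ a) (hb : 0 ≤ b) (hs0 : 0 < s)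
    (hs : s ≤ 1 / 4) (h : s < (a + b + s) ^ 2) : s ≤ 8 * (a ^ 2 + b ^ 2) := by
  by_contra! hlt
  obtain ⟨q, hq0, rfl⟩ : ∃ q, 0 < q ∧ q ^ 2 = s := ⟨√s, sqrt_pos.2 hs0, sq_sqrt hs0.le⟩
  have hq : q ≤ 1 / 2 := by nlinarith
  have hab : a + b < q / 2 := by nlinarith [sq_nonneg (a - b)]
  nlinarith

/-- Split `(a² + b²) / σ²` into two quarters and a half: one quarter absorbs the linear term,
the other is at least `1 / (32 s)`. -/
lemma linear_sub_gaussian_exponent_le {α σ s a b : ℝ} (hσ : 0 < σ) (hσs : σ ≤ s) (hs : s ≤ 1)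
    (hab : s ≤ 8 * (a ^ 2 + b ^ 2)) :
    2 * α * (a + b + 1) - (σ ^ 2)⁻¹ * (a ^ 2 + b ^ 2)
      ≤ 2 * α + 8 * α ^ 2 - 1 / 32 / s - (2 * σ ^ 2)⁻¹ * (a ^ 2 + b ^ 2) := by
  set R := a ^ 2 + b ^ 2
  have hR : 0 ≤ R := by positivity
  have hσ2 : σ ^ 2 ≤ 1 := by nlinarith
  have hlin : 2 * α * (a + b) - R / 4 ≤ 8 * α ^ 2 := by
    nlinarith [sq_nonneg (a / 2 - 2 * α), sq_nonneg (b / 2 - 2 * α)]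
  have hfirst : R / 4 ≤ R / (4 * σ ^ 2) :=
    div_le_div_of_nonneg_left hR (by positivity) (by linarith)
  have hsecond : 1 / 32 / s ≤ R / (4 * σ ^ 2) := by
    have hs0 : 0 < s := hσ.trans_le hσs
    rw [div_div, div_le_div_iff₀ (by positivity) (by positivity)]
    nlinarith [mul_le_mul_of_nonneg_left hab hσ.le, pow_le_pow_left₀ hσ.le hσs 2]
  have hsplit : (σ ^ 2)⁻¹ * R = R / (4 * σ ^ 2) + R / (4 * σ ^ 2) + (2 * σ ^ 2)⁻¹ * R := by
    field_simp; ring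
  linarith

section RelativeMomentum

variable {E : Type*}

def relMomentum [AddCommGroup E] [Module ℝ E] (μ₁ : ℝ) (x : E × E) : E :=
  (1 - μ₁) • x.1 - μ₁ • x.2

lemma norm_relMomentum_le [NormedAddCommGroup E] [NormedSpace ℝ E] {μ₁ : ℝ}
    (hμ : μ₁ ∈ Set.Icc (0 : ℝ) 1) (c : E) (x : E × E) :
    ‖relMomentum μ₁ x‖ ≤ ‖x.1 - c‖ + ‖x.2 + c‖ + ‖c‖ := by
  obtain ⟨hμ0, hμ1⟩ := hμ
  have hshift : relMomentum μ₁ x = (1 - μ₁) • (x.1 - c) - μ₁ • (x.2 + c) + c := by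
    unfold relMomentum; module
  calc ‖relMomentum μ₁ x‖ ≤ ‖(1 - μ₁) • (x.1 - c)‖ + ‖μ₁ • (x.2 + c)‖ + ‖c‖ := by
        rw [hshift]; exact (norm_add_le _ _).trans (by gcongr; exact norm_sub_le _ _)
    _ = (1 - μ₁) * ‖x.1 - c‖ + μ₁ * ‖x.2 + c‖ + ‖c‖ := by
        rw [norm_smul, norm_smul, Real.norm_of_nonneg (by linarith), Real.norm_of_nonneg hμ0]
    _ ≤ ‖x.1 - c‖ + ‖x.2 + c‖ + ‖c‖ := by
        nlinarith [norm_nonneg (x.1 - c), norm_nonneg (x.2 + c)]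

lemma ae_relMomentum_ne_zero [NormedAddCommGroup E] [NormedSpace ℝ E] [MeasurableSpace E]
    [BorelSpace E] [FiniteDimensional ℝ E] [Nontrivial E]
    (μ : Measure E) [μ.IsAddHaarMeasure] (μ₁ : ℝ) :
    ∀ᵐ x ∂μ.prod μ, relMomentum μ₁ x ≠ 0 := by
  let L : E × E →ₗ[ℝ] E := (1 - μ₁) • LinearMap.fst ℝ E E - μ₁ • LinearMap.snd ℝ E E
  have hker : LinearMap.ker L ≠ ⊤ := by
    obtain ⟨v, hv⟩ := exists_ne (0 : E)
    refine fun h => hv ?_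
    have : L (v, -v) = 0 := LinearMap.mem_ker.1 (h ▸ Submodule.mem_top)
    simpa [L, sub_smul, smul_neg] using this
  have hset : {x | ¬relMomentum μ₁ x ≠ 0} = (LinearMap.ker L : Set (E × E)) := by
    ext x; simp [relMomentum, L]
  rw [ae_iff, hset]
  exact Measure.addHaar_submodule (μ.prod μ) _ hker

end RelativeMomentum

section Gaussian

variable {V : Type*} [NormedAddCommGroup V] {b : ℝ}

noncomputable def pairGaussian (b : ℝ) (c : V) (x : V × V) : ℝ :=
  exp (-b * (‖x.1 - c‖ ^ 2 + ‖x.2 + c‖ ^ 2))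

lemma pairGaussian_eq_mul (b : ℝ) (c : V) (x : V × V) :
    pairGaussian b c x = exp (-b * ‖x.1 - c‖ ^ 2) * exp (-b * ‖x.2 - -c‖ ^ 2) := by
  rw [pairGaussian, sub_neg_eq_add, ← exp_add, mul_add]

variable [InnerProductSpace ℝ V] [FiniteDimensional ℝ V] [MeasurableSpace V] [BorelSpace V]

lemma integral_exp_neg_mul_sq_norm_sub (hb : 0 < b) (c : V) :
    ∫ v, exp (-b * ‖v - c‖ ^ 2) = (π / b) ^ (Module.finrank ℝ V / 2 : ℝ) := by
  rw [integral_sub_right_eq_self (fun v => exp (-b * ‖v‖ ^ 2)) c,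
    GaussianFourier.integral_rexp_neg_mul_sq_norm hb]

lemma integrable_exp_neg_mul_sq_norm_sub (hb : 0 < b) (c : V) :
    Integrable fun v => exp (-b * ‖v - c‖ ^ 2) :=
  .of_integral_ne_zero (by rw [integral_exp_neg_mul_sq_norm_sub hb]; positivity)

lemma integrable_pairGaussian (hb : 0 < b) (c : V) : Integrable (pairGaussian b c) := by
  simp_rw [funext (pairGaussian_eq_mul b c), Measure.volume_eq_prod]
  exact (integrable_exp_neg_mul_sq_norm_sub hb c).mul_prod (integrable_exp_neg_mul_sq_norm_sub hb _)

lemma integral_pairGaussian (hb : 0 < b) (c : V) :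
    ∫ x, pairGaussian b c x = (π / b) ^ Module.finrank ℝ V := by
  simp_rw [pairGaussian_eq_mul, Measure.volume_eq_prod]
  rw [integral_prod_mul (fun v => exp (-b * ‖v - c‖ ^ 2)) (fun v => exp (-b * ‖v - -c‖ ^ 2)),
    integral_exp_neg_mul_sq_norm_sub hb, integral_exp_neg_mul_sq_norm_sub hb,
    ← rpow_add (by positivity), add_halves, rpow_natCast]

end Gaussian

section GaussianState

variable {σ : ℝ} {p₀ : R2}

noncomputable def gaussianState (σ : ℝ) (p₀ : R2) (x : R2 × R2) : ℝ :=
  (σ ^ 2 * π)⁻¹ * exp (-‖x.1 - p₀‖ ^ 2 / (2 * σ ^ 2)) * exp (-‖x.2 + p₀‖ ^ 2 / (2 * σ ^ 2))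

lemma gaussianState_sq (hσ : σ ≠ 0) (p₀ : R2) (x : R2 × R2) :
    gaussianState σ p₀ x ^ 2 = (σ ^ 2 * π)⁻¹ ^ 2 * pairGaussian (σ ^ 2)⁻¹ p₀ x := by
  rw [gaussianState, pairGaussian, mul_pow, mul_pow, ← exp_nat_mul, ← exp_nat_mul, mul_assoc,
    ← exp_add]
  congr 2
  field_simp
  ring

lemma integrable_gaussianState_sq (hσ : σ ≠ 0) (p₀ : R2) :
    Integrable fun x => gaussianState σ p₀ x ^ 2 := by
  simp_rw [gaussianState_sq hσ]
  exact (integrable_pairGaussian (by positivity) p₀).const_mul _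

lemma integral_gaussianState_sq (hσ : σ ≠ 0) (p₀ : R2) :
    ∫ x, gaussianState σ p₀ x ^ 2 = 1 := by
  simp_rw [gaussianState_sq hσ]
  rw [integral_const_mul, integral_pairGaussian (by positivity), finrank_euclideanSpace_fin]
  field_simp

end GaussianState

section WeightedBound

variable {μ₁ α β σ : ℝ} {p₀ : R2}

lemma logWeight_sq_mul_gaussianState_sq_le (hμ : μ₁ ∈ Set.Icc (0 : ℝ) 1) (hα : 0 ≤ α)
    (hβ : 0 ≤ β) (hσ : 0 < σ) (hs : σ + ‖p₀‖ ≤ 1 / 4) {x : R2 × R2}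
    (hx : relMomentum μ₁ x ≠ 0) :
    logWeight α β (relMomentum μ₁ x) ^ 2 * gaussianState σ p₀ x ^ 2 ≤
      (2 ^ (α + β) * |log (σ + ‖p₀‖)| ^ (-β)) ^ 2 * gaussianState σ p₀ x ^ 2 +
        exp (2 * α + 8 * α ^ 2) * exp (-(1 / 32) / (σ + ‖p₀‖)) *
          ((σ ^ 2 * π)⁻¹ ^ 2 * pairGaussian (2 * σ ^ 2)⁻¹ p₀ x) := by
  set s := σ + ‖p₀‖
  set p := relMomentum μ₁ x
  have hs0 : 0 < s := by positivity
  have hW := logWeight_nonneg (α := α) (β := β) p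
  have hrest : 0 ≤ exp (2 * α + 8 * α ^ 2) * exp (-(1 / 32) / s) *
      ((σ ^ 2 * π)⁻¹ ^ 2 * pairGaussian (2 * σ ^ 2)⁻¹ p₀ x) := by
    unfold pairGaussian; positivity
  rcases le_or_gt (‖p‖ ^ 2) s with hsmall | hlarge
  · have hWs := logWeight_le_of_sq_norm_le hα hβ hx hsmall (by linarith)
    nlinarith [mul_le_mul_of_nonneg_right (pow_le_pow_left₀ hW hWs 2)
      (sq_nonneg (gaussianState σ p₀ x))]
  · set a := ‖x.1 - p₀‖
    set b := ‖x.2 + p₀‖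
    have hpg : ∀ t, pairGaussian t p₀ x = exp (-t * (a ^ 2 + b ^ 2)) := fun _ => rfl
    have hσs : σ ≤ s := by linarith [norm_nonneg p₀]
    have hp_le : ‖p‖ ≤ a + b + s :=
      (norm_relMomentum_le hμ p₀ x).trans (by linarith)
    have hR : s ≤ 8 * (a ^ 2 + b ^ 2) :=
      le_eight_mul_sq_add_sq (norm_nonneg _) (norm_nonneg _) hs0 hs
        (hlarge.trans_le (pow_le_pow_left₀ (norm_nonneg _) hp_le 2))
    have hW2 : logWeight α β p ^ 2 ≤ exp (2 * α * (a + b + 1)) := by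
      calc logWeight α β p ^ 2 ≤ exp (α * ‖p‖) ^ 2 :=
            pow_le_pow_left₀ hW (logWeight_le_exp hα hβ p) 2
        _ = exp (2 * α * ‖p‖) := by rw [← exp_nat_mul]; ring_nf
        _ ≤ exp (2 * α * (a + b + 1)) :=
            exp_le_exp.2 (mul_le_mul_of_nonneg_left (by linarith) (by positivity))
    calc logWeight α β p ^ 2 * gaussianState σ p₀ x ^ 2
        ≤ exp (2 * α * (a + b + 1)) * ((σ ^ 2 * π)⁻¹ ^ 2 * pairGaussian (σ ^ 2)⁻¹ p₀ x) := by
          rw [gaussianState_sq hσ.ne']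
          exact mul_le_mul_of_nonneg_right hW2 (by unfold pairGaussian; positivity)
      _ = (σ ^ 2 * π)⁻¹ ^ 2 * exp (2 * α * (a + b + 1) - (σ ^ 2)⁻¹ * (a ^ 2 + b ^ 2)) := by
          rw [hpg, mul_left_comm, ← exp_add, neg_mul, ← sub_eq_add_neg]
      _ ≤ (σ ^ 2 * π)⁻¹ ^ 2 *
            exp (2 * α + 8 * α ^ 2 - 1 / 32 / s - (2 * σ ^ 2)⁻¹ * (a ^ 2 + b ^ 2)) :=
          mul_le_mul_of_nonneg_left
            (exp_le_exp.2 (linear_sub_gaussian_exponent_le hσ hσs (by linarith) hR))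
            (by positivity)
      _ = exp (2 * α + 8 * α ^ 2) * exp (-(1 / 32) / s) *
            ((σ ^ 2 * π)⁻¹ ^ 2 * pairGaussian (2 * σ ^ 2)⁻¹ p₀ x) := by
          rw [hpg, ← exp_add, mul_left_comm, ← exp_add]
          congr 2
          ring
      _ ≤ _ := le_add_of_nonneg_left (by positivity)

lemma integral_logWeight_sq_mul_gaussianState_sq_le (hμ : μ₁ ∈ Set.Icc (0 : ℝ) 1)
    (hα : 0 ≤ α) (hβ : 0 ≤ β) (hσ : 0 < σ) (hs : σ + ‖p₀‖ ≤ 1 / 4) :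
    ∫ x, logWeight α β (relMomentum μ₁ x) ^ 2 * gaussianState σ p₀ x ^ 2 ≤
      (2 ^ (α + β) * |log (σ + ‖p₀‖)| ^ (-β)) ^ 2 +
        4 * exp (2 * α + 8 * α ^ 2) * exp (-(1 / 32) / (σ + ‖p₀‖)) := by
  have hbound : ∀ᵐ x : R2 × R2,
      logWeight α β (relMomentum μ₁ x) ^ 2 * gaussianState σ p₀ x ^ 2 ≤
        (2 ^ (α + β) * |log (σ + ‖p₀‖)| ^ (-β)) ^ 2 * gaussianState σ p₀ x ^ 2 +
          exp (2 * α + 8 * α ^ 2) * exp (-(1 / 32) / (σ + ‖p₀‖)) *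
            ((σ ^ 2 * π)⁻¹ ^ 2 * pairGaussian (2 * σ ^ 2)⁻¹ p₀ x) := by
    rw [Measure.volume_eq_prod]
    filter_upwards [ae_relMomentum_ne_zero volume μ₁] with x hx
    exact logWeight_sq_mul_gaussianState_sq_le hμ hα hβ hσ hs hx
  have hφ := integrable_gaussianState_sq hσ.ne' p₀
  have hg := (integrable_pairGaussian (V := R2) (b := (2 * σ ^ 2)⁻¹) (by positivity) p₀).const_mul
    ((σ ^ 2 * π)⁻¹ ^ 2)
  refine (integral_mono_of_nonneg (.of_forall fun x => by positivity)
    ((hφ.const_mul _).add (hg.const_mul _)) hbound).trans_eq ?_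
  rw [integral_add' (hφ.const_mul _) (hg.const_mul _), integral_const_mul, integral_const_mul,
    integral_const_mul, integral_gaussianState_sq hσ.ne', integral_pairGaussian (by positivity),
    finrank_euclideanSpace_fin]
  field_simp
  ring

end WeightedBound

/-- Proposition 3.1, estimate (3.12): weighted `L²` bound for the Gaussian incoming
state with mean relative momentum `p₀`, with `p := μ₂ p₁ - μ₁ p₂`. -/
theorem weighted_bound_nonzero_momentum (μ₁ : ℝ) (hμ : μ₁ ∈ Set.Icc (0:ℝ) 1)
    (α β : ℝ) (hα : 0 ≤ α) (hβ : 0 ≤ β) :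
    ∃ C > (0:ℝ), ∃ ε ∈ Set.Ioo (0:ℝ) 1, ∀ (σ : ℝ) (p₀ : R2), 0 < σ → σ + ‖p₀‖ < ε →
      Real.sqrt (∫ x : R2 × R2,
          (Real.log (2 + ‖(1 - μ₁) • x.1 - μ₁ • x.2‖) ^ α /
              (1 + |Real.log ‖(1 - μ₁) • x.1 - μ₁ • x.2‖|) ^ β) ^ 2 *
            ((σ ^ 2 * Real.pi)⁻¹ *
              Real.exp (-‖x.1 - p₀‖ ^ 2 / (2 * σ ^ 2)) *
              Real.exp (-‖x.2 + p₀‖ ^ 2 / (2 * σ ^ 2))) ^ 2)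
        ≤ C * |Real.log (σ + ‖p₀‖)| ^ (-β) := by
  obtain ⟨C, hC0, hC⟩ : ∃ C > (0 : ℝ),
      C ^ 2 = (2 ^ (α + β)) ^ 2 + 4 * exp (2 * α + 8 * α ^ 2) * (64 * β) ^ (2 * β) :=
    ⟨√_, by positivity, sq_sqrt (by positivity)⟩
  refine ⟨C, hC0, 1 / 4, by norm_num, fun σ p₀ hσ hs => ?_⟩
  set L := |log (σ + ‖p₀‖)| ^ (-β)
  have htail : exp (-(1 / 32) / (σ + ‖p₀‖)) ≤ (64 * β) ^ (2 * β) * L ^ 2 := by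
    rw [← rpow_two, ← rpow_mul (abs_nonneg _), neg_mul, mul_comm β]
    convert exp_neg_div_le_rpow_abs_log (c := 1 / 32) (b := 2 * β) (by norm_num) (by positivity)
      (by positivity : 0 < σ + ‖p₀‖) (by linarith) using 3
    ring
  have hint := integral_logWeight_sq_mul_gaussianState_sq_le hμ hα hβ hσ hs.le
  calc √(∫ x, logWeight α β (relMomentum μ₁ x) ^ 2 * gaussianState σ p₀ x ^ 2)
      ≤ √((C * L) ^ 2) := by
        refine sqrt_le_sqrt (hint.trans ?_)
        have hscaled := mul_le_mul_of_nonneg_left htail (by positivity : 0 ≤ 4 * exp (2 * α + 8 * α ^ 2))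
        rw [mul_pow C, hC]
        linarith
    _ = C * L := sqrt_sq (mul_nonneg hC0.le (rpow_nonneg (abs_nonneg _) _))
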